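/- Let ϖ = Σ_{j=1}^{N} η_j Z_j² where Z_1,...,Z_N are i.i.d. standard normal, η_j ≥ 0, Σ η_j = 1, and Var(ϖ) = 2 Σ η_j² =: v². Then for any 0 < r < 1, P(ϖ ≤ r) ≤ exp(−C(r)/v²) for a constant C(r) > 0 depending only on r. -/

import Mathlib

/-!
For `c ≤ 0` a standard Gaussian `Z` has `E exp(c Z²) = (1 - 2c)^(-1/2) ≤ exp(c + 2c²)`, so by
independence the moment generating function of `ϖ = ∑ ηᵢ Zᵢ²` at `t ≤ 0` is at most
`exp(t ∑ ηᵢ + 2t² ∑ ηᵢ²)`. Chernoff's bound at `t = -x / (4 ∑ ηᵢ²)` then gives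
`P(ϖ ≤ ∑ ηᵢ - x) ≤ exp(-x² / (8 ∑ ηᵢ²))`, and `x = 1 - r` yields `C(r) = (1 - r)² / 4`.
-/

open MeasureTheory ProbabilityTheory Real

lemma mgf_sq_gaussianReal {c : ℝ} (hc : c < 1 / 2) :
    mgf (fun x ↦ x ^ 2) (gaussianReal 0 1) c = (√(1 - 2 * c))⁻¹ := by
  have hb : 0 < 1 / 2 - c := by linarith
  have hdensity : ∀ x : ℝ, gaussianPDFReal 0 1 x * exp (c * x ^ 2)
      = (√(2 * π))⁻¹ * exp (-(1 / 2 - c) * x ^ 2) := fun x ↦ by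
    rw [gaussianPDFReal, NNReal.coe_one, mul_one, mul_assoc, ← exp_add]
    congr 2
    ring
  rw [mgf, integral_gaussianReal_eq_integral_smul one_ne_zero]
  simp_rw [smul_eq_mul, hdensity]
  rw [integral_const_mul, integral_gaussian, ← sqrt_inv, ← sqrt_mul (by positivity),
    ← sqrt_inv]
  congr 1
  field_simp

lemma neg_two_mul_sub_four_mul_sq_le_log {c : ℝ} (hc : c ≤ 0) :
    -2 * c - 4 * c ^ 2 ≤ log (1 - 2 * c) := by
  have hpos : 0 < 1 - 2 * c := by linarith
  have hinv : 1 - (1 - 2 * c)⁻¹ ≤ log (1 - 2 * c) := one_sub_inv_le_log_of_pos hpos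
  have : -2 * c - 4 * c ^ 2 ≤ 1 - (1 - 2 * c)⁻¹ := by
    rw [le_sub_iff_add_le, ← le_sub_iff_add_le', inv_le_comm₀ hpos (by nlinarith)]
    rw [inv_le_iff_one_le_mul₀' (by nlinarith)]
    nlinarith [sq_nonneg c, mul_nonneg (neg_nonneg.2 hc) (sq_nonneg c)]
  linarith

lemma mgf_sq_gaussianReal_le {c : ℝ} (hc : c ≤ 0) :
    mgf (fun x ↦ x ^ 2) (gaussianReal 0 1) c ≤ exp (c + 2 * c ^ 2) := by
  have hpos : 0 < 1 - 2 * c := by linarith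
  rw [mgf_sq_gaussianReal (by linarith), sqrt_eq_rpow, ← rpow_neg hpos.le, rpow_def_of_pos hpos,
    exp_le_exp]
  linarith [neg_two_mul_sub_four_mul_sq_le_log hc]

section WeightedChiSquared

variable {Ω ι : Type*} [MeasurableSpace Ω] {P : Measure Ω}

lemma aemeasurable_of_map_eq_gaussianReal {X : Ω → ℝ} {μ : ℝ} {v : NNReal}
    (hX : P.map X = gaussianReal μ v) : AEMeasurable X P :=
  AEMeasurable.of_map_ne_zero (hX ▸ IsProbabilityMeasure.ne_zero _)

lemma mgf_const_mul_sq_le {X : Ω → ℝ} (hX : P.map X = gaussianReal 0 1) {a t : ℝ}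
    (hat : a * t ≤ 0) :
    mgf (fun ω ↦ a * X ω ^ 2) P t ≤ exp (a * t + 2 * (a * t) ^ 2) := by
  have hmap : mgf (fun x ↦ x ^ 2) (P.map X) (a * t) = mgf (fun ω ↦ X ω ^ 2) P (a * t) :=
    mgf_map (aemeasurable_of_map_eq_gaussianReal hX) (by fun_prop)
  rw [mgf_const_mul, ← hmap, hX]
  exact mgf_sq_gaussianReal_le hat

lemma mgf_weighted_sum_sq_le [Fintype ι] {Z : ι → Ω → ℝ} {η : ι → ℝ}
    (hindep : iIndepFun Z P) (hZ : ∀ i, P.map (Z i) = gaussianReal 0 1) (hη : ∀ i, 0 ≤ η i)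
    {t : ℝ} (ht : t ≤ 0) :
    mgf (fun ω ↦ ∑ i, η i * Z i ω ^ 2) P t
      ≤ exp (t * ∑ i, η i + 2 * t ^ 2 * ∑ i, η i ^ 2) := by
  have hZm : ∀ i, AEMeasurable (Z i) P := fun i ↦ aemeasurable_of_map_eq_gaussianReal (hZ i)
  have hX : iIndepFun (fun i ω ↦ η i * Z i ω ^ 2) P :=
    hindep.comp (fun i x ↦ η i * x ^ 2) (fun i ↦ by fun_prop)
  calc mgf (fun ω ↦ ∑ i, η i * Z i ω ^ 2) P t
      = ∏ i, mgf (fun ω ↦ η i * Z i ω ^ 2) P t := by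
        rw [← hX.mgf_sum₀ (fun i ↦ by fun_prop) Finset.univ]
        congr 1
        ext ω
        simp
    _ ≤ ∏ i, exp (η i * t + 2 * (η i * t) ^ 2) :=
        Finset.prod_le_prod (fun _ _ ↦ mgf_nonneg)
          (fun i _ ↦ mgf_const_mul_sq_le (hZ i) (mul_nonpos_of_nonneg_of_nonpos (hη i) ht))
    _ = exp (t * ∑ i, η i + 2 * t ^ 2 * ∑ i, η i ^ 2) := by
        rw [← exp_sum, Finset.mul_sum, Finset.mul_sum, ← Finset.sum_add_distrib]
        congr 1
        refine Finset.sum_congr rfl fun i _ ↦ ?_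
        ring

-- The lower tail of the Laurent–Massart inequality.
lemma measure_weighted_sum_sq_le_sub_le [IsProbabilityMeasure P] [Fintype ι]
    {Z : ι → Ω → ℝ} {η : ι → ℝ} (hindep : iIndepFun Z P)
    (hZ : ∀ i, P.map (Z i) = gaussianReal 0 1) (hη : ∀ i, 0 ≤ η i) {x : ℝ} (hx : 0 ≤ x) :
    P {ω | ∑ i, η i * Z i ω ^ 2 ≤ ∑ i, η i - x}
      ≤ ENNReal.ofReal (exp (-x ^ 2 / (8 * ∑ i, η i ^ 2))) := by
  set s := ∑ i, η i ^ 2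
  have hs_nonneg : 0 ≤ s := Finset.sum_nonneg fun i _ ↦ sq_nonneg (η i)
  rcases hs_nonneg.eq_or_lt with hs | hs
  · rw [← hs, mul_zero, div_zero, exp_zero, ENNReal.ofReal_one]
    exact prob_le_one
  set S := fun ω ↦ ∑ i, η i * Z i ω ^ 2
  have hZm : ∀ i, AEMeasurable (Z i) P := fun i ↦ aemeasurable_of_map_eq_gaussianReal (hZ i)
  have hS_nonneg : ∀ ω, 0 ≤ S ω := fun ω ↦
    Finset.sum_nonneg fun i _ ↦ mul_nonneg (hη i) (sq_nonneg _)
  -- Chernoff's bound at the minimiser of `t ↦ t x + 2 t² s`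
  set t := -x / (4 * s) with ht_def
  have ht : t ≤ 0 := div_nonpos_of_nonpos_of_nonneg (by linarith) (by positivity)
  have hint : Integrable (fun ω ↦ exp (t * S ω)) P := by
    refine Integrable.of_bound (by fun_prop) 1 (Filter.Eventually.of_forall fun ω ↦ ?_)
    rw [norm_of_nonneg (exp_pos _).le, exp_le_one_iff]
    exact mul_nonpos_of_nonpos_of_nonneg ht (hS_nonneg ω)
  have hexp : -t * (∑ i, η i - x) + (t * ∑ i, η i + 2 * t ^ 2 * s) = -x ^ 2 / (8 * s) := by
    rw [ht_def]
    field_simp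
    ring
  rw [← ofReal_measureReal]
  refine ENNReal.ofReal_le_ofReal ?_
  calc P.real {ω | S ω ≤ ∑ i, η i - x}
      ≤ exp (-t * (∑ i, η i - x)) * mgf S P t := measure_le_le_exp_mul_mgf _ ht hint
    _ ≤ exp (-t * (∑ i, η i - x)) * exp (t * ∑ i, η i + 2 * t ^ 2 * s) :=
        mul_le_mul_of_nonneg_left (mgf_weighted_sum_sq_le hindep hZ hη ht) (exp_pos _).le
    _ = exp (-x ^ 2 / (8 * s)) := by rw [← exp_add, hexp]

end WeightedChiSquared

theorem stmt_9_general (r : ℝ) (hr1 : r < 1) :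
    ∃ C : ℝ, 0 < C ∧
      ∀ (N : ℕ) (Ω : Type) (_ : MeasurableSpace Ω) (P : Measure Ω)
        (_ : IsProbabilityMeasure P) (Z : Fin N → Ω → ℝ) (η : Fin N → ℝ),
        iIndepFun Z P →
        (∀ i, Measure.map (Z i) P = gaussianReal 0 1) →
        (∀ i, 0 ≤ η i) → (∑ i, η i) = 1 →
        P {ω | ∑ i, η i * Z i ω ^ 2 ≤ r}
          ≤ ENNReal.ofReal (Real.exp (-C / (2 * ∑ i, η i ^ 2))) := by
  refine ⟨(1 - r) ^ 2 / 4, div_pos (pow_pos (by linarith) 2) four_pos, ?_⟩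
  intro N Ω _ P _ Z η hindep hZ hη hsum
  have h := measure_weighted_sum_sq_le_sub_le hindep hZ hη (x := 1 - r) (by linarith)
  rw [hsum, sub_sub_cancel] at h
  convert h using 3
  ring

/-- Lower-tail concentration for a unit-mean weighted chi-squared sum
`ϖ = ∑ η_j Z_j²`: for every `0 < r < 1` there is `C(r) > 0`, depending only on
`r`, such that `P(ϖ ≤ r) ≤ exp(-C(r)/v²)` where `v² = 2 ∑ η_j²  = Var(ϖ)`. -/
theorem stmt_9 (r : ℝ) (hr0 : 0 < r) (hr1 : r < 1) :
    ∃ C : ℝ, 0 < C ∧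
      ∀ (N : ℕ) (Ω : Type) (_ : MeasurableSpace Ω) (P : Measure Ω)
        (_ : IsProbabilityMeasure P) (Z : Fin N → Ω → ℝ) (η : Fin N → ℝ),
        iIndepFun Z P →
        (∀ i, Measure.map (Z i) P = gaussianReal 0 1) →
        (∀ i, 0 ≤ η i) → (∑ i, η i) = 1 →
        P {ω | ∑ i, η i * Z i ω ^ 2 ≤ r}
          ≤ ENNReal.ofReal (Real.exp (-C / (2 * ∑ i, η i ^ 2))) :=
  stmt_9_general r hr1
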